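/- arXiv:2312.10255 — 4 statements merged into one kernel-verified Lean document; each statement's English description precedes it below -/
import Mathlib

section
/- Let ψ: ℝ⁺ → ℝ⁺ be decreasing and set Ψ(s) = ψ(s)^(−n/(n+1)). If x ∈ ℝⁿ and v ∈ ℚⁿ ∩ [0,1]ⁿ satisfy d(x,v) ≤ ψ(H(v)), then for t defined by e^t = Ψ(H(v)), the vector a_t u_x 𝐯 attains its sup-norm in the first coordinate, i.e. |⟨e₁, a_t u_x 𝐯⟩| = ‖a_t u_x 𝐯‖, and ‖a_t u_x 𝐯‖ ≤ e^{−t} Ψ^{−1}(e^t). -/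
open Real Filter

/-- The unipotent matrix `u_x` with first column `(1, -x₁, …, -xₙ)`. -/
noncomputable def uMat (n : ℕ) (x : Fin n → ℝ) : Matrix (Fin (n+1)) (Fin (n+1)) ℝ :=
  fun i j => if i = j then 1 else if j = 0 then Fin.cases 0 (fun k => -x k) i else 0

/-- The diagonal matrix `a_t = diag(e^{-t}, e^{t/n}, …, e^{t/n})`. -/
noncomputable def aMat (n : ℕ) (t : ℝ) : Matrix (Fin (n+1)) (Fin (n+1)) ℝ :=
  Matrix.diagonal (fun i => if i = 0 then Real.exp (-t) else Real.exp (t / n))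

/-- The integer vector `𝐯 = (q, p₁, …, pₙ)` viewed in `ℝ^{n+1}` (with the sup norm). -/
noncomputable def intVec (n : ℕ) (q : ℤ) (p : Fin n → ℤ) : Fin (n+1) → ℝ :=
  Fin.cases (q : ℝ) (fun k => (p k : ℝ))

/-!
Since `v ∈ [0,1]ⁿ`, the height of `v` is `q`. The vector `u_x 𝐯` is `(q, p₁ - x₁q, …, pₙ - xₙq)`,
and `|pₖ - xₖq| ≤ q ψ(q)`. The choice of `t` is exactly the one for which `a_t` scales both
`q` (by `e^{-t}`) and `q ψ(q)` (by `e^{t/n}`) to the same number `e^{-t} q`.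
-/

lemma pi_norm_eq_norm_of_forall_le {ι E : Type*} [Fintype ι] [SeminormedAddGroup E]
    (w : ι → E) (i₀ : ι) (h : ∀ i, ‖w i‖ ≤ ‖w i₀‖) : ‖w‖ = ‖w i₀‖ :=
  le_antisymm ((pi_norm_le_iff_of_nonneg (norm_nonneg _)).2 h) (norm_le_pi_norm w i₀)

lemma norm_intVec {n : ℕ} {q : ℤ} {p : Fin n → ℤ} (hq : 0 < q) (hp : ∀ k, |(p k : ℝ)| ≤ q) :
    ‖intVec n q p‖ = q := by
  have hq' : (0 : ℝ) < q := by exact_mod_cast hq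
  rw [pi_norm_eq_norm_of_forall_le _ 0]
  · simp [intVec, abs_of_pos hq']
  · intro i
    cases i using Fin.cases with
    | zero => exact le_rfl
    | succ k => simpa [intVec, abs_of_pos hq'] using hp k

section Coordinates

variable {n : ℕ}

lemma uMat_mulVec_zero (x : Fin n → ℝ) (v : Fin (n+1) → ℝ) : ((uMat n x).mulVec v) 0 = v 0 := by
  rw [Matrix.mulVec, dotProduct, Finset.sum_eq_single 0]
  · simp [uMat]
  · intro j _ hj
    simp [uMat, hj, Ne.symm hj]
  · simp

lemma uMat_mulVec_succ (x : Fin n → ℝ) (v : Fin (n+1) → ℝ) (k : Fin n) :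
    ((uMat n x).mulVec v) k.succ = v k.succ - x k * v 0 := by
  rw [Matrix.mulVec, dotProduct, Fin.sum_univ_succ, Finset.sum_eq_single k]
  · simp [uMat, Fin.succ_ne_zero]
    ring
  · intro j _ hj
    simp [uMat, Fin.succ_ne_zero, Ne.symm hj]
  · simp

lemma aMat_mulVec_zero (t : ℝ) (v : Fin (n+1) → ℝ) : ((aMat n t).mulVec v) 0 = exp (-t) * v 0 := by
  rw [aMat, Matrix.mulVec_diagonal]
  simp

lemma aMat_mulVec_succ (t : ℝ) (v : Fin (n+1) → ℝ) (k : Fin n) :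
    ((aMat n t).mulVec v) k.succ = exp (t / n) * v k.succ := by
  rw [aMat, Matrix.mulVec_diagonal]
  simp [Fin.succ_ne_zero]

end Coordinates

lemma exp_div_mul_eq_exp_neg {n : ℕ} (hn : n ≠ 0) {c t : ℝ} (hc : 0 ≤ c)
    (ht : exp t = c ^ (-(n : ℝ) / (n + 1))) : exp (t / n) * c = exp (-t) := by
  have hn' : (n : ℝ) ≠ 0 := by exact_mod_cast hn
  have hc0 : 0 < c := by
    refine hc.lt_of_ne' fun h => (exp_pos t).ne' ?_
    rw [ht, h, zero_rpow]
    exact div_ne_zero (neg_ne_zero.2 hn') (by positivity)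
  have hlog : t = -(n : ℝ) / (n + 1) * log c := by
    rw [← log_rpow hc0, ← ht, log_exp]
  rw [← exp_log hc0, ← exp_add, hlog]
  congr 1
  field_simp
  ring

lemma abs_sub_mul_eq_abs_sub_div_mul {a x q : ℝ} (hq : 0 < q) :
    |a - x * q| = |x - a / q| * q := by
  rw [← abs_of_pos hq, ← abs_mul, abs_of_pos hq, abs_sub_comm, sub_mul, div_mul_cancel₀ _ hq.ne']

lemma abs_le_of_div_mem_Icc {a q : ℝ} (hq : 0 < q) (h : 0 ≤ a / q ∧ a / q ≤ 1) : |a| ≤ q := by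
  rw [abs_of_nonneg (by simpa using (le_div_iff₀ hq).1 h.1)]
  exact (div_le_one hq).1 h.2

theorem dani_forward_general (n : ℕ) (ψ : ℝ → ℝ)
    (x : Fin n → ℝ) (q : ℤ) (hq : 0 < q) (p : Fin n → ℤ)
    (hbox : ∀ i, 0 ≤ (p i : ℝ) / q ∧ (p i : ℝ) / q ≤ 1)
    (H : ℝ) (hH : H = ‖intVec n q p‖)
    (hdist : ‖x - fun i => (p i : ℝ) / q‖ ≤ ψ H)
    (t : ℝ) (ht : Real.exp t = (ψ H) ^ (-(n : ℝ) / ((n : ℝ) + 1))) :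
    |((aMat n t * uMat n x).mulVec (intVec n q p)) 0|
        = ‖(aMat n t * uMat n x).mulVec (intVec n q p)‖ ∧
      ‖(aMat n t * uMat n x).mulVec (intVec n q p)‖ ≤ Real.exp (-t) * H := by
  have hq' : (0 : ℝ) < q := by exact_mod_cast hq
  rw [hH, norm_intVec hq fun k => abs_le_of_div_mem_Icc hq' (hbox k)]
  set w := (aMat n t * uMat n x).mulVec (intVec n q p) with hw
  have hw0 : |w 0| = exp (-t) * (q : ℝ) := by
    rw [hw, ← Matrix.mulVec_mulVec, aMat_mulVec_zero, uMat_mulVec_zero]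
    simp [intVec, abs_of_pos hq']
  have hw_succ (k : Fin n) : |w k.succ| ≤ exp (-t) * (q : ℝ) := by
    have hdist_k : |x k - p k / q| ≤ ψ H := (norm_le_pi_norm _ k).trans hdist
    rw [hw, ← Matrix.mulVec_mulVec, aMat_mulVec_succ, uMat_mulVec_succ, abs_mul, abs_of_pos (exp_pos _)]
    simp only [intVec, Fin.cases_zero, Fin.cases_succ]
    rw [abs_sub_mul_eq_abs_sub_div_mul hq',
      ← exp_div_mul_eq_exp_neg k.pos.ne' ((norm_nonneg _).trans hdist) ht, ← mul_assoc]
    gcongr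
  have hnorm : ‖w‖ = |w 0| := pi_norm_eq_norm_of_forall_le w 0 fun i => by
    cases i using Fin.cases with
    | zero => exact le_rfl
    | succ k => simpa only [Real.norm_eq_abs, hw0] using hw_succ k
  exact ⟨hnorm.symm, (hnorm.trans hw0).le⟩

/-- Dani correspondence, forward direction: if `d(x,v) ≤ ψ(H(v))` for a rational
point `v = p/q ∈ [0,1]ⁿ` and `e^t = Ψ(H(v))` where `Ψ(s) = ψ(s)^{-n/(n+1)}`, then
`a_t u_x 𝐯` attains its sup-norm on the first coordinate and
`‖a_t u_x 𝐯‖ ≤ e^{-t} H(v) = e^{-t} Ψ^{-1}(e^t)`. -/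
theorem dani_forward (n : ℕ) (hn : 1 ≤ n) (ψ : ℝ → ℝ)
    (hψpos : ∀ s > 0, 0 < ψ s) (hψdec : StrictAntiOn ψ (Set.Ioi 0))
    (x : Fin n → ℝ) (q : ℤ) (hq : 0 < q) (p : Fin n → ℤ)
    (hprim : Finset.univ.gcd (fun i : Fin (n+1) => (Fin.cases q p i : ℤ)) = 1)
    (hbox : ∀ i, 0 ≤ (p i : ℝ) / q ∧ (p i : ℝ) / q ≤ 1)
    (H : ℝ) (hH : H = ‖intVec n q p‖)
    (hdist : ‖x - fun i => (p i : ℝ) / q‖ ≤ ψ H)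
    (t : ℝ) (ht : Real.exp t = (ψ H) ^ (-(n : ℝ) / ((n : ℝ) + 1))) :
    |((aMat n t * uMat n x).mulVec (intVec n q p)) 0|
        = ‖(aMat n t * uMat n x).mulVec (intVec n q p)‖ ∧
      ‖(aMat n t * uMat n x).mulVec (intVec n q p)‖ ≤ Real.exp (-t) * H :=
  dani_forward_general n ψ x q hq p hbox H hH hdist t ht
end

section
/- Let ψ: ℝ⁺ → ℝ⁺ satisfy: s ↦ s·ψ(s) is decreasing and ψ(s) = o(s^{−(n+1)/n}). Define Ψ(s) = ψ(s)^(−n/(n+1)) and r_ψ(t) = −t + log Ψ^{−1}(e^t). Then: (1) t ↦ r_ψ(t) − t/n is decreasing; (2) t ↦ r_ψ(t) + t is increasing; (3) r_ψ(t) → −∞ as t → +∞. -/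
open Real Filter

/-- Generalized inverse of `Ψ(s) = ψ(s)^{-n/(n+1)}`. -/
noncomputable def PsiInv (n : ℕ) (ψ : ℝ → ℝ) (y : ℝ) : ℝ :=
  sSup {s : ℝ | 0 < s ∧ (ψ s) ^ (-(n : ℝ) / ((n : ℝ) + 1)) ≤ y}

/-- `r_ψ(t) = -t + log Ψ^{-1}(e^t)`. -/
noncomputable def rpsi (n : ℕ) (ψ : ℝ → ℝ) (t : ℝ) : ℝ :=
  -t + Real.log (PsiInv n ψ (Real.exp t))

/-- Basic properties of `r_ψ` when `s ↦ s ψ(s)` is decreasing and `ψ(s) = o(s^{-(n+1)/n})`: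
`r_ψ(t) - t/n` is non-increasing, `r_ψ(t) + t` is non-decreasing, and `r_ψ(t) → -∞`. -/
theorem rpsi_properties (n : ℕ) (hn : 1 ≤ n) (ψ : ℝ → ℝ)
    (hψpos : ∀ s > 0, 0 < ψ s) (hψdec : StrictAntiOn ψ (Set.Ioi 0))
    (hθ : StrictAntiOn (fun s => s * ψ s) (Set.Ioi 0))
    (hsmall : Tendsto (fun s => s ^ (((n : ℝ) + 1) / n) * ψ s) atTop (nhds 0)) :
    AntitoneOn (fun t => rpsi n ψ t - t / n) (Set.Ioi 0) ∧
      MonotoneOn (fun t => rpsi n ψ t + t) (Set.Ioi 0) ∧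
      Tendsto (rpsi n ψ) atTop atBot := by
  have hn0 : (0:ℝ) < n := by exact_mod_cast hn
  set p : ℝ := ((n:ℝ)+1)/(n:ℝ) with hpdef
  have hp0 : 0 < p := by positivity
  -- membership characterization
  have hmem : ∀ y : ℝ, 0 < y → ∀ s : ℝ, 0 < s →
      ((ψ s) ^ (-(n:ℝ) / ((n:ℝ) + 1)) ≤ y ↔ y ^ (-p) ≤ ψ s) := by
    intro y hy s hs
    have ha : 0 < ψ s := hψpos s hs
    have hq : -(n:ℝ) / ((n:ℝ)+1) = -((n:ℝ)/((n:ℝ)+1)) := by ring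
    have hqneg : -((n:ℝ)/((n:ℝ)+1)) < 0 := by
      have h0 : 0 < (n:ℝ)/((n:ℝ)+1) := by positivity
      linarith
    have hypos : 0 < y ^ (-p) := Real.rpow_pos_of_pos hy _
    have key : (y ^ (-p)) ^ (-((n:ℝ)/((n:ℝ)+1))) = y := by
      rw [← Real.rpow_mul hy.le]
      have h1 : -p * -((n:ℝ)/((n:ℝ)+1)) = 1 := by
        rw [hpdef]; field_simp
      rw [h1, Real.rpow_one]
    constructor
    · intro h
      rw [hq] at h
      have h' : ψ s ^ (-((n:ℝ)/((n:ℝ)+1))) ≤ (y ^ (-p)) ^ (-((n:ℝ)/((n:ℝ)+1))) := by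
        rw [key]; exact h
      exact (Real.rpow_le_rpow_iff_of_neg ha hypos hqneg).1 h'
    · intro h
      rw [hq]
      have h' := (Real.rpow_le_rpow_iff_of_neg ha hypos hqneg).2 h
      rwa [key] at h'
  -- ψ is unbounded near 0
  have hub : ∀ M : ℝ, 0 < M → ∃ s : ℝ, 0 < s ∧ M ≤ ψ s := by
    intro M hM
    have hc : 0 < ψ 1 := hψpos 1 one_pos
    set s := min (1/2 : ℝ) (ψ 1 / M) with hsdef
    have hs0 : 0 < s := lt_min (by norm_num) (by positivity)
    have hslt : s < 1 := lt_of_le_of_lt (min_le_left _ _) (by norm_num)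
    have hθ1 : (1:ℝ) * ψ 1 < s * ψ s :=
      hθ (Set.mem_Ioi.2 hs0) (Set.mem_Ioi.2 one_pos) hslt
    have h2 : s ≤ ψ 1 / M := min_le_right _ _
    have h3 : s * M ≤ ψ 1 := by
      rw [← le_div_iff₀ hM] at *
      exact h2
    have h4 : s * M < s * ψ s := by nlinarith
    exact ⟨s, hs0, le_of_lt ((mul_lt_mul_iff_right₀ hs0).1 h4)⟩
  -- ψ tends to 0 at infinity (quantitative form)
  have hψ0 : ∀ ε : ℝ, 0 < ε → ∃ s₀ : ℝ, 1 ≤ s₀ ∧ ∀ s, s₀ ≤ s → ψ s < ε := by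
    intro ε hε
    obtain ⟨s₀, hs₀⟩ := eventually_atTop.1 (hsmall.eventually_lt_const hε)
    refine ⟨max s₀ 1, le_max_right _ _, fun s hs => ?_⟩
    have hs1 : (1:ℝ) ≤ s := le_trans (le_max_right _ _) hs
    have h1 := hs₀ s (le_trans (le_max_left _ _) hs)
    have hps : 1 ≤ s ^ p := Real.one_le_rpow hs1 hp0.le
    have hψs : 0 < ψ s := hψpos s (by linarith)
    nlinarith
  set A : ℝ → Set ℝ :=
    fun y => {s : ℝ | 0 < s ∧ (ψ s) ^ (-(n:ℝ)/((n:ℝ)+1)) ≤ y} with hA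
  have hPsi : ∀ y, PsiInv n ψ y = sSup (A y) := fun y => rfl
  have hne : ∀ y : ℝ, 0 < y → (A y).Nonempty := by
    intro y hy
    obtain ⟨s, hs0, hsM⟩ := hub (y ^ (-p)) (Real.rpow_pos_of_pos hy _)
    exact ⟨s, hs0, (hmem y hy s hs0).2 hsM⟩
  have hbdd : ∀ y : ℝ, 0 < y → BddAbove (A y) := by
    intro y hy
    obtain ⟨s₀, hs₀1, hs₀⟩ := hψ0 (y ^ (-p)) (Real.rpow_pos_of_pos hy _)
    refine ⟨s₀, fun s hs => ?_⟩
    by_contra hlt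
    push_neg at hlt
    have h1 := (hmem y hy s hs.1).1 hs.2
    have h2 := hs₀ s hlt.le
    linarith
  have hSpos : ∀ y : ℝ, 0 < y → 0 < PsiInv n ψ y := by
    intro y hy
    obtain ⟨s, hsA⟩ := hne y hy
    exact lt_of_lt_of_le hsA.1 (le_csSup (hbdd y hy) hsA)
  -- monotonicity of PsiInv
  have hmono : ∀ y₁ y₂ : ℝ, 0 < y₁ → y₁ ≤ y₂ → PsiInv n ψ y₁ ≤ PsiInv n ψ y₂ := by
    intro y₁ y₂ hy₁ h12
    exact csSup_le_csSup (hbdd y₂ (lt_of_lt_of_le hy₁ h12)) (hne y₁ hy₁)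
      (fun s hs => ⟨hs.1, le_trans hs.2 h12⟩)
  -- key slope estimate
  have hslope : ∀ y₁ y₂ : ℝ, 0 < y₁ → y₁ ≤ y₂ →
      PsiInv n ψ y₂ * y₂ ^ (-p) ≤ PsiInv n ψ y₁ * y₁ ^ (-p) := by
    intro y₁ y₂ hy₁ h12
    have hy₂ : 0 < y₂ := lt_of_lt_of_le hy₁ h12
    set ε₁ := y₁ ^ (-p) with hε₁
    set ε₂ := y₂ ^ (-p) with hε₂
    have hε₁0 : 0 < ε₁ := Real.rpow_pos_of_pos hy₁ _
    have hε₂0 : 0 < ε₂ := Real.rpow_pos_of_pos hy₂ _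
    have hε21 : ε₂ ≤ ε₁ :=
      Real.rpow_le_rpow_of_nonpos hy₁ h12 (by linarith)
    have hS₁ : 0 < PsiInv n ψ y₁ := hSpos y₁ hy₁
    have key : ∀ s ∈ A y₂, s * ε₂ ≤ PsiInv n ψ y₁ * ε₁ := by
      intro s hs
      obtain ⟨hs0, hs2⟩ := hs
      have hψs : ε₂ ≤ ψ s := (hmem y₂ hy₂ s hs0).1 hs2
      have main : ∀ s', PsiInv n ψ y₁ < s' → s * ε₂ ≤ s' * ε₁ := by
        intro s' hs'
        have hs'0 : 0 < s' := lt_trans hS₁ hs'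
        rcases le_or_gt s s' with h | h
        · calc s * ε₂ ≤ s' * ε₂ := by nlinarith
            _ ≤ s' * ε₁ := by nlinarith
        · have hnotin : s' ∉ A y₁ := fun hm =>
            absurd (le_csSup (hbdd y₁ hy₁) hm) (not_le.2 hs')
          have hψs' : ψ s' < ε₁ := by
            by_contra hge
            push_neg at hge
            exact hnotin ⟨hs'0, (hmem y₁ hy₁ s' hs'0).2 hge⟩
          have hθlt : s * ψ s < s' * ψ s' :=
            hθ (Set.mem_Ioi.2 hs'0) (Set.mem_Ioi.2 hs0) h
          refine le_of_lt ?_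
          calc s * ε₂ ≤ s * ψ s := by nlinarith
            _ < s' * ψ s' := hθlt
            _ ≤ s' * ε₁ := by nlinarith
      have hdiv : s * ε₂ / ε₁ ≤ PsiInv n ψ y₁ := by
        apply le_of_forall_gt_imp_ge_of_dense
        intro a ha
        rw [div_le_iff₀ hε₁0]
        exact main a ha
      rw [div_le_iff₀ hε₁0] at hdiv
      exact hdiv
    have hSle : PsiInv n ψ y₂ ≤ PsiInv n ψ y₁ * ε₁ / ε₂ := by
      apply csSup_le (hne y₂ hy₂)
      intro s hs
      rw [le_div_iff₀ hε₂0]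
      exact key s hs
    calc PsiInv n ψ y₂ * ε₂ ≤ (PsiInv n ψ y₁ * ε₁ / ε₂) * ε₂ := by nlinarith
      _ = PsiInv n ψ y₁ * ε₁ := by field_simp
  -- exp t ^ (-p) = exp (-(t * p))
  have hexp : ∀ t : ℝ, Real.exp t ^ (-p) = Real.exp (-(t * p)) := by
    intro t
    rw [Real.rpow_def_of_pos (Real.exp_pos t), Real.log_exp]
    ring_nf
  have htp : ∀ t : ℝ, t * p = t + t / n := by
    intro t
    rw [hpdef]
    field_simp
  refine ⟨?_, ?_, ?_⟩
  · -- antitone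
    intro t₁ ht₁ t₂ ht₂ h12
    simp only [rpsi]
    have hS₁ := hSpos _ (Real.exp_pos t₁)
    have hS₂ := hSpos _ (Real.exp_pos t₂)
    have hsl := hslope _ _ (Real.exp_pos t₁) (Real.exp_le_exp.2 h12)
    rw [hexp t₁, hexp t₂] at hsl
    have hlog : Real.log (PsiInv n ψ (Real.exp t₂)) - t₂ * p
        ≤ Real.log (PsiInv n ψ (Real.exp t₁)) - t₁ * p := by
      have hpos2 : 0 < PsiInv n ψ (Real.exp t₂) * Real.exp (-(t₂ * p)) := by positivity
      have := (Real.log_le_log_iff hpos2 (by positivity)).2 hsl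
      rwa [Real.log_mul (ne_of_gt hS₂) (Real.exp_ne_zero _),
        Real.log_mul (ne_of_gt hS₁) (Real.exp_ne_zero _),
        Real.log_exp, Real.log_exp] at this
    have e₁ := htp t₁
    have e₂ := htp t₂
    linarith
  · -- monotone
    intro t₁ ht₁ t₂ ht₂ h12
    simp only [rpsi]
    have hS₁ := hSpos _ (Real.exp_pos t₁)
    have hS₂ := hSpos _ (Real.exp_pos t₂)
    have := (Real.log_le_log_iff hS₁ hS₂).2
      (hmono _ _ (Real.exp_pos t₁) (Real.exp_le_exp.2 h12))
    linarith
  · -- tends to -∞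
    rw [tendsto_atBot]
    intro b
    set ε := Real.exp b with hεdef
    have hε : 0 < ε := Real.exp_pos b
    have hεp : 0 < ε ^ p := Real.rpow_pos_of_pos hε _
    obtain ⟨s₀, hs₀⟩ := eventually_atTop.1 (hsmall.eventually_lt_const hεp)
    set s₁ := max s₀ 1 with hs₁def
    have hs₁0 : 0 < s₁ := lt_of_lt_of_le one_pos (le_max_right _ _)
    filter_upwards [eventually_ge_atTop (Real.log (s₁ / ε))] with t ht
    have hyp : 0 < Real.exp t := Real.exp_pos t
    have hyt : s₁ / ε ≤ Real.exp t := by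
      calc s₁/ε = Real.exp (Real.log (s₁/ε)) := (Real.exp_log (by positivity)).symm
        _ ≤ Real.exp t := Real.exp_le_exp.2 ht
    have hs₁le : s₁ ≤ ε * Real.exp t := by
      rw [div_le_iff₀ hε] at hyt
      linarith
    have hSle : PsiInv n ψ (Real.exp t) ≤ ε * Real.exp t := by
      apply csSup_le (hne _ hyp)
      intro s hs
      obtain ⟨hs0, hs2⟩ := hs
      have hψs : Real.exp t ^ (-p) ≤ ψ s := (hmem _ hyp s hs0).1 hs2
      rcases lt_or_ge s s₁ with h | h
      · linarith
      · have h1 := hs₀ s (le_trans (le_max_left _ _) h)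
        have hsp : 0 < s ^ p := Real.rpow_pos_of_pos hs0 _
        have hetp : 0 < Real.exp t ^ p := Real.rpow_pos_of_pos hyp _
        have h2 : s ^ p * Real.exp t ^ (-p) < ε ^ p := by
          have := Real.rpow_pos_of_pos hyp (-p)
          nlinarith
        rw [Real.rpow_neg hyp.le] at h2
        have h3 : s ^ p < ε ^ p * Real.exp t ^ p := by
          calc s ^ p = s ^ p * (Real.exp t ^ p)⁻¹ * Real.exp t ^ p := by
                field_simp
            _ < ε ^ p * Real.exp t ^ p := mul_lt_mul_of_pos_right h2 hetp
        have h4 : s ^ p ≤ (ε * Real.exp t) ^ p := by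
          rw [Real.mul_rpow hε.le hyp.le]
          exact h3.le
        exact (Real.rpow_le_rpow_iff hs0.le (by positivity) hp0).1 h4
    have hlog : Real.log (PsiInv n ψ (Real.exp t)) ≤ Real.log (ε * Real.exp t) :=
      (Real.log_le_log_iff (hSpos _ hyp) (by positivity)).2 hSle
    rw [Real.log_mul (ne_of_gt hε) (Real.exp_ne_zero _), Real.log_exp,
      Real.log_exp] at hlog
    simp only [rpsi]
    linarith
end

section
/- Let ψ: ℝ⁺ → ℝ⁺ be decreasing with lower order at infinity λ_ψ = liminf_{s→∞} (−log ψ(s))/(log s). Set Ψ(s) = ψ(s)^(−n/(n+1)) and r_ψ(t) = −t + log Ψ^{−1}(e^t). Then liminf_{t→∞} (−r_ψ(t))/t = (nλ_ψ − n − 1)/(nλ_ψ). -/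
/-!
Put `c = n/(n+1)` and `μ = c λ_ψ > 0`, so that `Ψ = ψ^{-c}` has `liminf log Ψ(s) / log s = μ`.
For `a < μ` we have `Ψ(s) ≥ s^a` for all large `s`, which caps `Ψ^{-1}(e^t)` by `e^{t/a}`;
for `a > μ` we have `Ψ(s) ≤ s^a` for arbitrarily large `s`, which puts `s = e^{t/a}` below
`Ψ^{-1}(e^t)` for arbitrarily large `t`. Hence `-r_ψ(t)/t = 1 - log Ψ^{-1}(e^t) / t` has
`liminf` equal to `1 - 1/μ = (nλ_ψ - n - 1)/(nλ_ψ)`.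
-/

open Real Filter

open Topology

theorem liminf_eq_of_forall_lt_eventually_of_forall_gt_frequently {α β : Type*}
    [ConditionallyCompleteLinearOrder β] [DenselyOrdered β] [NoMinOrder β] [NoMaxOrder β]
    {f : Filter α} [f.NeBot] {u : α → β} {L : β}
    (hlow : ∀ y < L, ∀ᶠ x in f, y ≤ u x) (hup : ∀ y > L, ∃ᶠ x in f, u x ≤ y) :
    liminf u f = L := by
  obtain ⟨y₀, hy₀⟩ := exists_lt L
  obtain ⟨y₁, hy₁⟩ := exists_gt L
  have hbdd : f.IsBoundedUnder (· ≥ ·) u := ⟨y₀, eventually_map.2 (hlow y₀ hy₀)⟩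
  have hcobdd : f.IsCoboundedUnder (· ≥ ·) u := IsCoboundedUnder.of_frequently_le (hup y₁ hy₁)
  exact le_antisymm ((liminf_le_iff' hcobdd hbdd).2 hup) ((le_liminf_iff' hcobdd hbdd).2 hlow)

noncomputable def sublevelSup (Φ : ℝ → ℝ) (y : ℝ) : ℝ :=
  sSup {s : ℝ | 0 < s ∧ Φ s ≤ y}

section sublevelSup

variable {Φ : ℝ → ℝ} {a : ℝ}

theorem sublevelSup_nonneg (y : ℝ) : 0 ≤ sublevelSup Φ y :=
  Real.sSup_nonneg fun _ hs => hs.1.le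

theorem le_max_rpow_inv_of_mem_sublevel {S s y : ℝ} (ha : 0 < a)
    (hS : ∀ s ≥ S, s ^ a ≤ Φ s) (hs : s ∈ {s : ℝ | 0 < s ∧ Φ s ≤ y}) :
    s ≤ max S (y ^ a⁻¹) := by
  rcases le_or_gt s S with hsS | hSs
  · exact le_max_of_le_left hsS
  · have hsy : s ^ a ≤ y := (hS s hSs.le).trans hs.2
    have hy : 0 ≤ y := (Real.rpow_nonneg hs.1.le a).trans hsy
    exact le_max_of_le_right ((Real.le_rpow_inv_iff_of_pos hs.1.le hy ha).2 hsy)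

theorem bddAbove_sublevel (ha : 0 < a) (hΦ : ∀ᶠ s in atTop, s ^ a ≤ Φ s) (y : ℝ) :
    BddAbove {s : ℝ | 0 < s ∧ Φ s ≤ y} := by
  obtain ⟨S, hS⟩ := eventually_atTop.1 hΦ
  exact ⟨_, fun s hs => le_max_rpow_inv_of_mem_sublevel ha hS hs⟩

theorem eventually_log_sublevelSup_exp_le (ha : 0 < a) (hΦ : ∀ᶠ s in atTop, s ^ a ≤ Φ s) :
    ∀ᶠ t in atTop, log (sublevelSup Φ (exp t)) ≤ t / a := by
  obtain ⟨S, hS⟩ := eventually_atTop.1 (hΦ.and (eventually_gt_atTop 0))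
  have hS₀ : 0 < S := (hS S le_rfl).2
  filter_upwards [eventually_ge_atTop 0, eventually_ge_atTop (a * log S)] with t ht₀ htS
  have hSle : S ≤ exp t ^ a⁻¹ := by
    rw [← Real.exp_mul, ← div_eq_mul_inv, ← exp_log hS₀]
    exact exp_le_exp.2 ((le_div_iff₀' ha).2 htS)
  have hsup : sublevelSup Φ (exp t) ≤ exp (t / a) := by
    rw [div_eq_mul_inv, Real.exp_mul, ← max_eq_right hSle]
    exact Real.sSup_le
      (fun s hs => le_max_rpow_inv_of_mem_sublevel ha (fun s hs => (hS s hs).1) hs)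
      (by positivity)
  rcases (sublevelSup_nonneg (Φ := Φ) (exp t)).eq_or_lt with h0 | hpos
  · rw [← h0, log_zero]
    positivity
  · exact (log_le_iff_le_exp hpos).2 hsup

theorem frequently_le_log_sublevelSup_exp (ha : 0 < a)
    (hbdd : ∀ y, BddAbove {s : ℝ | 0 < s ∧ Φ s ≤ y}) (hΦ : ∃ᶠ s in atTop, Φ s ≤ s ^ a) :
    ∃ᶠ t in atTop, t / a ≤ log (sublevelSup Φ (exp t)) := by
  refine (tendsto_log_atTop.const_mul_atTop ha).frequently ?_
  refine (hΦ.and_eventually (eventually_gt_atTop 0)).mono fun s ⟨hΦs, hs⟩ => ?_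
  have hexp : exp (a * log s) = s ^ a := by rw [rpow_def_of_pos hs, mul_comm]
  rw [mul_div_cancel_left₀ _ ha.ne']
  refine log_le_log hs (le_csSup (hbdd _) ⟨hs, ?_⟩)
  rwa [hexp]

end sublevelSup

theorem liminf_sub_log_sublevelSup_exp_div {Φ : ℝ → ℝ} {μ : ℝ} (hμ : 0 < μ)
    (hlow : ∀ a < μ, ∀ᶠ s in atTop, s ^ a ≤ Φ s) (hup : ∀ a > μ, ∃ᶠ s in atTop, Φ s ≤ s ^ a) :
    liminf (fun t => (t - log (sublevelSup Φ (exp t))) / t) atTop = 1 - μ⁻¹ := by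
  have hcont : Tendsto (fun a : ℝ => 1 - a⁻¹) (𝓝 μ) (𝓝 (1 - μ⁻¹)) :=
    tendsto_const_nhds.sub (tendsto_inv₀ hμ.ne')
  apply liminf_eq_of_forall_lt_eventually_of_forall_gt_frequently
  · intro y hy
    have hnear : ∀ᶠ a in 𝓝[<] μ, a ∈ Set.Ioo 0 μ ∧ y < 1 - a⁻¹ :=
      Filter.Eventually.and (Ioo_mem_nhdsLT hμ)
        ((hcont.mono_left nhdsWithin_le_nhds).eventually (lt_mem_nhds hy))
    obtain ⟨a, ⟨ha₀, haμ⟩, hay⟩ := hnear.exists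
    filter_upwards [eventually_log_sublevelSup_exp_le ha₀ (hlow a haμ), eventually_gt_atTop 0]
      with t hlog ht
    rw [le_div_iff₀ ht]
    have := mul_lt_mul_of_pos_right hay ht
    rw [div_eq_mul_inv] at hlog
    linarith
  · intro y hy
    have hnear : ∀ᶠ a in 𝓝[>] μ, μ < a ∧ 1 - a⁻¹ < y :=
      Filter.Eventually.and self_mem_nhdsWithin
        ((hcont.mono_left nhdsWithin_le_nhds).eventually (gt_mem_nhds hy))
    obtain ⟨a, hμa, hay⟩ := hnear.exists
    have hbdd := bddAbove_sublevel (half_pos hμ) (hlow _ (half_lt_self hμ))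
    refine ((frequently_le_log_sublevelSup_exp (hμ.trans hμa) hbdd (hup a hμa)).and_eventually
      (eventually_gt_atTop 0)).mono fun t ⟨hlog, ht⟩ => ?_
    rw [div_le_iff₀ ht]
    have := mul_lt_mul_of_pos_right hay ht
    rw [div_eq_mul_inv] at hlog
    linarith

theorem rpow_le_rpow_neg_iff {s x a c : ℝ} (hs : 1 < s) (hx : 0 < x) (hc : 0 < c) :
    s ^ a ≤ x ^ (-c) ↔ a / c ≤ -log x / log s := by
  rw [← log_le_log_iff (by positivity) (by positivity), log_rpow (zero_lt_one.trans hs),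
    log_rpow hx, div_le_div_iff₀ hc (log_pos hs)]
  constructor <;> intro h <;> nlinarith

theorem rpow_neg_le_rpow_iff {s x a c : ℝ} (hs : 1 < s) (hx : 0 < x) (hc : 0 < c) :
    x ^ (-c) ≤ s ^ a ↔ -log x / log s ≤ a / c := by
  rw [← log_le_log_iff (by positivity) (by positivity), log_rpow (zero_lt_one.trans hs),
    log_rpow hx, div_le_div_iff₀ (log_pos hs) hc]
  constructor <;> intro h <;> nlinarith

section lowerOrder

variable {ψ : ℝ → ℝ} {c lam : ℝ}

theorem eventually_rpow_le_rpow_neg (hψ : ∀ s > 0, 0 < ψ s) (hc : 0 < c)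
    (hlam : liminf (fun s => -log (ψ s) / log s) atTop = lam) (hlam₀ : lam ≠ 0) {a : ℝ}
    (ha : a < c * lam) : ∀ᶠ s in atTop, s ^ a ≤ ψ s ^ (-c) := by
  -- an unbounded function would have the junk `liminf` value `0`
  have hbdd : IsBoundedUnder (· ≥ ·) atTop fun s => -log (ψ s) / log s := by
    by_contra h
    exact hlam₀ (hlam ▸ Real.liminf_of_not_isBoundedUnder h)
  have hlt : a / c < liminf (fun s => -log (ψ s) / log s) atTop := by
    rwa [hlam, div_lt_iff₀' hc]
  filter_upwards [eventually_lt_of_lt_liminf hlt hbdd, eventually_gt_atTop 1] with s hs hs₁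
  exact (rpow_le_rpow_neg_iff hs₁ (hψ s (by linarith)) hc).2 hs.le

theorem frequently_rpow_neg_le_rpow (hψ : ∀ s > 0, 0 < ψ s) (hc : 0 < c)
    (hlam : liminf (fun s => -log (ψ s) / log s) atTop = lam) (hlam₀ : lam ≠ 0) {a : ℝ}
    (ha : c * lam < a) : ∃ᶠ s in atTop, ψ s ^ (-c) ≤ s ^ a := by
  have hcobdd : IsCoboundedUnder (· ≥ ·) atTop fun s => -log (ψ s) / log s := by
    by_contra h
    exact hlam₀ (hlam ▸ Real.liminf_of_not_isCoboundedUnder h)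
  have hlt : liminf (fun s => -log (ψ s) / log s) atTop < a / c := by
    rwa [hlam, lt_div_iff₀' hc]
  refine ((frequently_lt_of_liminf_lt hcobdd hlt).and_eventually (eventually_gt_atTop 1)).mono
    fun s ⟨hs, hs₁⟩ => ?_
  exact (rpow_neg_le_rpow_iff hs₁ (hψ s (by linarith)) hc).2 hs.le

end lowerOrder

theorem gamma_of_lambda_general (n : ℕ) (hn : 1 ≤ n) (ψ : ℝ → ℝ)
    (hψpos : ∀ s > 0, 0 < ψ s)
    (lam : ℝ) (hlam : lam = liminf (fun s => -Real.log (ψ s) / Real.log s) atTop)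
    (hlam_ge : ((n : ℝ) + 1) / n ≤ lam) :
    liminf (fun t => -(rpsi n ψ t) / t) atTop
      = ((n : ℝ) * lam - (n : ℝ) - 1) / ((n : ℝ) * lam) := by
  have hn₀ : (0 : ℝ) < n := by exact_mod_cast hn
  set c : ℝ := n / (n + 1)
  have hc : 0 < c := by positivity
  have hlam_pos : 0 < lam := lt_of_lt_of_le (by positivity) hlam_ge
  have hrpsi : (fun t => -(rpsi n ψ t) / t)
      = fun t => (t - log (sublevelSup (fun s => ψ s ^ (-c)) (exp t))) / t := by
    ext t
    simp only [rpsi, PsiInv, sublevelSup, c, neg_div]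
    ring
  rw [hrpsi, liminf_sub_log_sublevelSup_exp_div (mul_pos hc hlam_pos)
    (fun a ha => eventually_rpow_le_rpow_neg hψpos hc hlam.symm hlam_pos.ne' ha)
    (fun a ha => frequently_rpow_neg_le_rpow hψpos hc hlam.symm hlam_pos.ne' ha)]
  simp only [c]
  field_simp
  ring

/-- The lower order at infinity `λ_ψ = liminf (-log ψ(s))/(log s)` can be read off `r_ψ`:
`liminf (-r_ψ(t))/t = (nλ_ψ - n - 1)/(nλ_ψ)`. -/
theorem gamma_of_lambda (n : ℕ) (hn : 1 ≤ n) (ψ : ℝ → ℝ)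
    (hψpos : ∀ s > 0, 0 < ψ s) (hψdec : StrictAntiOn ψ (Set.Ioi 0))
    (lam : ℝ) (hlam : lam = liminf (fun s => -Real.log (ψ s) / Real.log s) atTop)
    (hlam_ge : ((n : ℝ) + 1) / n ≤ lam) :
    liminf (fun t => -(rpsi n ψ t) / t) atTop
      = ((n : ℝ) * lam - (n : ℝ) - 1) / ((n : ℝ) * lam) :=
  gamma_of_lambda_general n hn ψ hψpos lam hlam hlam_ge
end

section
/- Let (t_k) be an increasing sequence, r: ℝ⁺ → ℝ⁻ a function with t ↦ r(t)+t increasing and t ↦ r(t)−t/n decreasing. Define t_k^− = t_k + r(t_k), t_k^+ = t_k − n·r(t_k), and assume 0 < t₁^− < t₁ < t₁^+ < t₂^− < …. Define the piecewise-linear continuous function T: ℝ⁺ → ℝ⁻ with T(0)=0 and slope 0 on (t_{k−1}^+, t_k^−), slope −1 on (t_k^−, t_k), slope 1/n on (t_k, t_k^+). Then T(t_k) = r(t_k) for all k, and T(t) ≥ r(t) for all t > 0. -/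
open Real Filter

/-- The template `T` lies above `r` and touches it at the times `t_k`.
Here `t k`, `k = 0, 1, 2, …` plays the role of the sequence `t₁ < t₂ < …`,
`tm k = t_k^- = t_k + r(t_k)`, `tp k = t_k^+ = t_k - n r(t_k)`, and the piecewise linear
template `T` is described by its values: `T = 0` on `[0, t₁^-]` and on each `[t_k^+, t_{k+1}^-]`,
`T` has slope `-1` on `[t_k^-, t_k]` and slope `1/n` on `[t_k, t_k^+]`. -/
theorem template_above_rpsi (n : ℕ) (hn : 1 ≤ n) (r : ℝ → ℝ)
    (hrneg : ∀ s > 0, r s ≤ 0)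
    (hr_add : MonotoneOn (fun s => r s + s) (Set.Ioi 0))
    (hr_sub : AntitoneOn (fun s => r s - s / n) (Set.Ioi 0))
    (t : ℕ → ℝ) (htend : Tendsto t atTop atTop)
    (tm tp : ℕ → ℝ)
    (htm : ∀ k, tm k = t k + r (t k)) (htp : ∀ k, tp k = t k - (n : ℝ) * r (t k))
    (hchain0 : 0 < tm 0)
    (hchain : ∀ k, tm k < t k ∧ t k < tp k ∧ tp k < tm (k + 1))
    (T : ℝ → ℝ)
    (hT0 : ∀ s ∈ Set.Icc (0 : ℝ) (tm 0), T s = 0)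
    (hTflat : ∀ k, ∀ s ∈ Set.Icc (tp k) (tm (k + 1)), T s = 0)
    (hTdown : ∀ k, ∀ s ∈ Set.Icc (tm k) (t k), T s = tm k - s)
    (hTup : ∀ k, ∀ s ∈ Set.Icc (t k) (tp k), T s = r (t k) + (s - t k) / n) :
    (∀ k, T (t k) = r (t k)) ∧ ∀ s > 0, r s ≤ T s := by
  classical
  have hpos : ∀ k, 0 < tm k := by
    intro k; induction k with
    | zero => exact hchain0
    | succ k ih =>
      have h := hchain k
      linarith [h.1, h.2.1, h.2.2]
  have htpos : ∀ k, 0 < t k := fun k => lt_trans (hpos k) (hchain k).1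
  have hTt : ∀ k, T (t k) = r (t k) := by
    intro k
    have := hTdown k (t k) ⟨le_of_lt (hchain k).1, le_refl _⟩
    rw [this, htm k]; ring
  refine ⟨hTt, ?_⟩
  intro s hs
  have hex : ∃ k, s ≤ tm k := by
    obtain ⟨k, hk⟩ := (htend.eventually (eventually_ge_atTop s)).exists
    exact ⟨k + 1, le_of_lt (lt_of_le_of_lt hk (lt_trans (hchain k).2.1 (hchain k).2.2))⟩
  set k := Nat.find hex with hkdef
  have hk : s ≤ tm k := Nat.find_spec hex
  rcases Nat.eq_zero_or_pos k with h0 | hkpos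
  · rw [h0] at hk
    rw [hT0 s ⟨le_of_lt hs, hk⟩]
    exact hrneg s hs
  · obtain ⟨j, hj⟩ : ∃ j, k = j + 1 := ⟨k - 1, by omega⟩
    have hjlt : tm j < s := by
      have := Nat.find_min hex (m := j) (by omega)
      linarith [not_le.mp this]
    rw [hj] at hk
    by_cases h1 : s ≤ t j
    · rw [hTdown j s ⟨le_of_lt hjlt, h1⟩]
      have := hr_add (Set.mem_Ioi.mpr hs) (Set.mem_Ioi.mpr (htpos j)) h1
      simp only at this
      rw [htm j]
      linarith
    · push_neg at h1
      by_cases h2 : s ≤ tp j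
      · rw [hTup j s ⟨le_of_lt h1, h2⟩]
        have := hr_sub (Set.mem_Ioi.mpr (htpos j)) (Set.mem_Ioi.mpr hs) (le_of_lt h1)
        simp only at this
        linarith [sub_div s (t j) (n : ℝ)]
      · push_neg at h2
        rw [hTflat j s ⟨le_of_lt h2, hk⟩]
        exact hrneg s hs
end
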